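/- Let R be a valuation ring, Z its set of zero-divisors, and Q = R_Z its total quotient ring. Then the following conditions are equivalent: (1) Z is a nilpotent ideal; (2) Q is an artinian ring; (3) every flat R-module is finitely projective; (4) every flat R-module is singly projective. -/

import Mathlib

/-!
In a ring whose ideals form a chain, the zero divisors form a prime ideal `Z` whose complement
is exactly the set of non-zero-divisors, so `Q = R_Z` is a local ring with maximal ideal `ZQ`,
again with totally ordered ideals. A nilpotent maximal ideal of such a ring is principal
(generated by any element outside its square), so `Q` is noetherian, hence artinian.

If `Q` is noetherian, every submodule `K` of `Rⁿ` contains a finitely generated `K₀` such that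
every element of `K` has a multiple in `K₀` by a non-zero-divisor. Flatness of `M` factors
`Rⁿ → M` through a free module by a map killing `K₀`, hence killing `K` since free modules are
torsion-free; this gives the factorization of `Rⁿ/K ≅ N ⊆ M` through a free module.

If `Z` is not nilpotent, there are `tᵢ ∈ Z` with all products `t₀ ⋯ tₚ₋₁` nonzero (either
some element of `Z` is not nilpotent, or `Z = Z²`). The direct limit of
`R --t₀--> R --t₁--> ⋯` is flat, and if it were singly projective, the annihilator of the image
of `1` would equal the annihilator of a single product `t₀ ⋯ tₚ₋₁`; comparing that product
with an element killing `tₚ` contradicts the chain condition.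
-/

universe u

/-- `M` is singly projective if for every cyclic submodule `N` of `M` the inclusion
`N → M` factors through a free module. -/
def SinglyProjective (R : Type u) [Ring R] (M : Type v) [AddCommGroup M] [Module R M] : Prop :=
  ∀ x : M, ∃ (ι : Type v) (φ : (Submodule.span R ({x} : Set M)) →ₗ[R] (ι →₀ R))
    (π : (ι →₀ R) →ₗ[R] M), ∀ n : (Submodule.span R ({x} : Set M)), π (φ n) = (n : M)

/-- `M` is finitely projective if for every finitely generated submodule `N` of `M` the
inclusion `N → M` factors through a free module. -/
def FinitelyProjective (R : Type u) [Ring R] (M : Type v) [AddCommGroup M] [Module R M] : Prop :=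
  ∀ N : Submodule R M, N.FG → ∃ (ι : Type v) (φ : N →ₗ[R] (ι →₀ R))
    (π : (ι →₀ R) →ₗ[R] M), ∀ n : N, π (φ n) = (n : M)

universe v

open nonZeroDivisors IsLocalRing Finset

theorem exists_seq_forall_prod_range {M : Type*} [CommMonoid M] {S : Set M} {P : M → Prop}
    (h1 : P 1) (step : ∀ s, P s → ∃ a ∈ S, P (s * a)) :
    ∃ t : ℕ → M, (∀ i, t i ∈ S) ∧ ∀ p, P (∏ i ∈ range p, t i) := by
  choose! a haS haP using step
  let s (n : ℕ) : M := Nat.rec 1 (fun _ s => s * a s) n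
  have hs (n : ℕ) : P (s n) := by
    induction n with
    | zero => exact h1
    | succ n ih => exact haP _ ih
  have hprod (p : ℕ) : ∏ i ∈ range p, a (s i) = s p := by
    induction p with
    | zero => rfl
    | succ p ih => rw [prod_range_succ, ih]
  exact ⟨fun i => a (s i), fun i => haS _ (hs i), fun p => hprod p ▸ hs p⟩

section ChainRing

variable {R : Type*} [CommRing R]

theorem setOf_exists_ne_zero_mul_eq_zero :
    {r : R | ∃ s : R, s ≠ 0 ∧ r * s = 0} = ((R⁰ : Submonoid R) : Set R)ᶜ := by
  ext r
  simp [mem_nonZeroDivisors_iff_right, mul_comm r, and_comm]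

theorem Ideal.exists_seq_prod_range_ne_zero_of_isIdempotentElem {I : Ideal R}
    (hI : IsIdempotentElem I) (hI0 : I ≠ ⊥) :
    ∃ t : ℕ → R, (∀ i, t i ∈ I) ∧ ∀ p, ∏ i ∈ range p, t i ≠ 0 := by
  have h1 : (1 : R) ∉ Submodule.annihilator I := fun h =>
    hI0 ((Submodule.eq_bot_iff I).mpr fun w hw => by
      simpa using Submodule.mem_annihilator.mp h w hw)
  have step (s : R) (hs : s ∉ Submodule.annihilator I) :
      ∃ a ∈ I, s * a ∉ Submodule.annihilator I := by
    -- otherwise `s` kills `I * I = I`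
    by_contra! h
    refine hs (Submodule.mem_annihilator.mpr fun w hw => ?_)
    rw [← hI.eq] at hw
    refine Submodule.mul_induction_on hw (fun a ha b hb => ?_) (fun _ _ h₁ h₂ => ?_)
    · rw [smul_eq_mul, ← mul_assoc, ← smul_eq_mul]
      exact Submodule.mem_annihilator.mp (h a ha) b hb
    · rw [smul_add, h₁, h₂, add_zero]
  obtain ⟨t, htI, ht⟩ := exists_seq_forall_prod_range h1 step
  exact ⟨t, htI, fun p h => ht p (h ▸ Submodule.zero_mem _)⟩

variable (hval : ∀ I J : Ideal R, I ≤ J ∨ J ≤ I)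
include hval

theorem dvd_or_dvd_of_chain (a b : R) : a ∣ b ∨ b ∣ a := by
  simpa only [Ideal.span_singleton_le_span_singleton] using hval (Ideal.span {b}) (Ideal.span {a})

theorem Ideal.isNilpotent_of_notMem_mul_self {I : Ideal R} {z : R} (hz' : z ∉ I * I)
    (hzn : IsNilpotent z) : IsNilpotent I := by
  have hle : I * I ≤ Ideal.span {z} := (hval _ _).resolve_right fun h =>
    hz' (h (Ideal.mem_span_singleton_self z))
  obtain ⟨k, hk⟩ := hzn
  refine ⟨2 * k, le_bot_iff.mp ?_⟩
  calc I ^ (2 * k) = (I * I) ^ k := by rw [pow_mul, sq]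
    _ ≤ Ideal.span {z} ^ k := Ideal.pow_right_mono hle k
    _ = ⊥ := by rw [Ideal.span_singleton_pow, hk, Ideal.span_singleton_eq_bot.mpr rfl]

theorem Ideal.exists_seq_prod_range_ne_zero {I : Ideal R} (hI : ¬IsNilpotent I) :
    ∃ t : ℕ → R, (∀ i, t i ∈ I) ∧ ∀ p, ∏ i ∈ range p, t i ≠ 0 := by
  by_cases hz : ∃ z ∈ I, ¬IsNilpotent z
  · obtain ⟨z, hz, hzn⟩ := hz
    exact ⟨fun _ => z, fun _ => hz, fun p h => hzn ⟨p, by simpa using h⟩⟩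
  push Not at hz
  refine exists_seq_prod_range_ne_zero_of_isIdempotentElem
    (le_antisymm Ideal.mul_le_right fun z hzI => ?_) fun h => hI ⟨1, by simp [h]⟩
  by_contra hz'
  exact hI (isNilpotent_of_notMem_mul_self hval hz' (hz z hzI))

theorem exists_mul_mul_eq_zero_and_mul_ne_zero {s t c : R} (hc : c ≠ 0) (hct : c * t = 0)
    (hst : s * t ≠ 0) : ∃ a, a * (s * t) = 0 ∧ a * s ≠ 0 := by
  rcases dvd_or_dvd_of_chain hval s c with ⟨u, rfl⟩ | ⟨v, rfl⟩
  · exact ⟨u, by linear_combination hct, by rwa [mul_comm]⟩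
  · exact absurd (by linear_combination v * hct) hst

theorem mem_span_compl_nonZeroDivisors_iff [Nontrivial R] {r : R} :
    r ∈ Ideal.span ((R⁰ : Submonoid R) : Set R)ᶜ ↔ r ∉ R⁰ := by
  refine ⟨fun hr => ?_, fun hr => Ideal.subset_span hr⟩
  simp only [mem_nonZeroDivisors_iff_right, not_forall, exists_prop] at hr ⊢
  induction hr using Submodule.span_induction with
  | mem x hx => simpa [mem_nonZeroDivisors_iff_right] using hx
  | zero => exact ⟨1, mul_zero 1, one_ne_zero⟩
  | add x y _ _ hx hy =>
    obtain ⟨a, hax, ha⟩ := hx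
    obtain ⟨b, hby, hb⟩ := hy
    rcases dvd_or_dvd_of_chain hval a b with ⟨c, rfl⟩ | ⟨c, rfl⟩
    · exact ⟨a * c, by linear_combination c * hax + hby, hb⟩
    · exact ⟨b * c, by linear_combination hax + c * hby, ha⟩
  | smul r x _ hx =>
    obtain ⟨a, hax, ha⟩ := hx
    exact ⟨a, by rw [smul_eq_mul, mul_left_comm, hax, mul_zero], ha⟩

theorem isPrime_span_compl_nonZeroDivisors [Nontrivial R] :
    (Ideal.span ((R⁰ : Submonoid R) : Set R)ᶜ).IsPrime where
  ne_top' h := by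
    have h1 : (1 : R) ∈ Ideal.span ((R⁰ : Submonoid R) : Set R)ᶜ := h ▸ Submodule.mem_top
    exact (mem_span_compl_nonZeroDivisors_iff hval).mp h1 (one_mem _)
  mem_or_mem' {a b} h := by
    simp only [mem_span_compl_nonZeroDivisors_iff hval] at h ⊢
    by_contra! hab
    exact h (mul_mem hab.1 hab.2)

theorem isLocalization_atPrime_fractionRing [Nontrivial R]
    [(Ideal.span ((R⁰ : Submonoid R) : Set R)ᶜ).IsPrime] :
    IsLocalization.AtPrime (FractionRing R) (Ideal.span ((R⁰ : Submonoid R) : Set R)ᶜ) := by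
  have : (Ideal.span ((R⁰ : Submonoid R) : Set R)ᶜ).primeCompl = R⁰ := by
    ext r
    simp [Ideal.primeCompl, mem_span_compl_nonZeroDivisors_iff hval]
  rw [IsLocalization.AtPrime, this]
  infer_instance

theorem chain_of_isLocalization (M : Submonoid R) (S : Type*) [CommRing S] [Algebra R S]
    [IsLocalization M S] (I J : Ideal S) : I ≤ J ∨ J ≤ I := by
  rw [← IsLocalization.map_under M S I, ← IsLocalization.map_under M S J]
  exact (hval _ _).imp (Ideal.map_mono ·) (Ideal.map_mono ·)

end ChainRing

section LocalChain

variable {Q : Type*} [CommRing Q] [IsLocalRing Q] (hval : ∀ I J : Ideal Q, I ≤ J ∨ J ≤ I)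
include hval

theorem eq_span_singleton_of_notMem_maximalIdeal_mul {I : Ideal Q} {a : Q} (ha : a ∈ I)
    (ha' : a ∉ maximalIdeal Q * I) : I = Ideal.span {a} := by
  refine le_antisymm (fun x hx => ?_) (Ideal.span_le.mpr (Set.singleton_subset_iff.mpr ha))
  rcases hval (Ideal.span {x}) (Ideal.span {a}) with h | h
  · exact h (Ideal.mem_span_singleton_self x)
  obtain ⟨u, rfl⟩ := Ideal.mem_span_singleton'.mp (h (Ideal.mem_span_singleton_self a))
  have hu : IsUnit u := by
    by_contra hu
    exact ha' (Ideal.mul_mem_mul ((mem_maximalIdeal u).mpr hu) hx)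
  obtain ⟨v, hv⟩ := hu.exists_left_inv
  exact Ideal.mem_span_singleton'.mpr ⟨v, by rw [← mul_assoc, hv, one_mul]⟩

theorem fg_maximalIdeal_of_isNilpotent (h : IsNilpotent (maximalIdeal Q)) :
    (maximalIdeal Q).FG := by
  by_cases hm : maximalIdeal Q ≤ maximalIdeal Q * maximalIdeal Q
  · obtain ⟨n, hn⟩ := h
    have hidem : IsIdempotentElem (maximalIdeal Q) := le_antisymm Ideal.mul_le_right hm
    rw [← hidem.pow_succ_eq n, pow_succ, hn, zero_mul]
    exact Submodule.fg_bot
  · obtain ⟨a, ha, ha'⟩ := SetLike.not_le_iff_exists.mp hm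
    rw [eq_span_singleton_of_notMem_maximalIdeal_mul hval ha ha']
    exact Submodule.fg_span_singleton a

theorem isNoetherianRing_of_isNilpotent_maximalIdeal (h : IsNilpotent (maximalIdeal Q)) :
    IsNoetherianRing Q := by
  refine IsNoetherianRing.of_prime fun P hP => ?_
  obtain ⟨n, hn⟩ := h
  have : P = maximalIdeal Q :=
    le_antisymm (le_maximalIdeal hP.ne_top) (hP.le_of_pow_le (by rw [hn]; exact bot_le))
  exact this ▸ fg_maximalIdeal_of_isNilpotent hval ⟨n, hn⟩

theorem isArtinianRing_iff_isNilpotent_maximalIdeal_of_chain :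
    IsArtinianRing Q ↔ IsNilpotent (maximalIdeal Q) := by
  refine ⟨fun _ => (isArtinianRing_iff_isNilpotent_maximalIdeal Q).mp ‹_›, fun h => ?_⟩
  have := isNoetherianRing_of_isNilpotent_maximalIdeal hval h
  exact (isArtinianRing_iff_isNilpotent_maximalIdeal Q).mpr h

end LocalChain

theorem Ideal.isNilpotent_map_iff {R S : Type*} [CommRing R] [CommRing S] {f : R →+* S}
    (hf : Function.Injective f) {I : Ideal R} : IsNilpotent (I.map f) ↔ IsNilpotent I := by
  simp only [IsNilpotent, ← Ideal.map_pow, Ideal.zero_eq_bot,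
    Ideal.map_eq_bot_iff_of_injective hf]

theorem isNilpotent_span_compl_nonZeroDivisors_iff_isArtinianRing {R : Type*} [CommRing R]
    (hval : ∀ I J : Ideal R, I ≤ J ∨ J ≤ I) :
    IsNilpotent (Ideal.span ((R⁰ : Submonoid R) : Set R)ᶜ) ↔ IsArtinianRing (FractionRing R) := by
  rcases subsingleton_or_nontrivial R with _ | _
  · exact iff_of_true ⟨1, Subsingleton.elim _ _⟩ inferInstance
  set Z := Ideal.span ((R⁰ : Submonoid R) : Set R)ᶜ
  have := isPrime_span_compl_nonZeroDivisors hval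
  have := isLocalization_atPrime_fractionRing hval
  have := IsLocalization.AtPrime.isLocalRing (FractionRing R) Z
  rw [isArtinianRing_iff_isNilpotent_maximalIdeal_of_chain (chain_of_isLocalization hval R⁰ _),
    ← IsLocalization.AtPrime.map_eq_maximalIdeal Z (FractionRing R),
    Ideal.isNilpotent_map_iff (IsFractionRing.injective R _)]

theorem Submodule.exists_fg_le_forall_smul_mem {R P : Type*} [CommRing R] [AddCommGroup P]
    [Module R P] [Module.Finite R P] [IsNoetherianRing (FractionRing R)] (K : Submodule R P) :
    ∃ K₀ ≤ K, K₀.FG ∧ ∀ p ∈ K, ∃ t ∈ R⁰, t • p ∈ K₀ := by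
  let f := LocalizedModule.mkLinearMap R⁰ P
  let loc (L : Submodule R P) := L.localized' (FractionRing R) R⁰ f
  have hmono : Monotone loc := (localized'gi (FractionRing R) R⁰ f).gc.monotone_l
  obtain ⟨_, ⟨K₀, ⟨hK₀, hfg⟩, rfl⟩, hmax⟩ := set_has_maximal_iff_noetherian.mpr inferInstance
    (loc '' {L | L ≤ K ∧ L.FG}) ⟨_, ⟨⊥, ⟨bot_le, fg_bot⟩, rfl⟩⟩
  refine ⟨K₀, hK₀, hfg, fun p hp => ?_⟩
  -- `K₀` has a maximal localization, which adding `p` cannot enlarge.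
  have hsup : loc (K₀ ⊔ span R {p}) = loc K₀ :=
    ((hmono le_sup_left).lt_or_eq.resolve_left (hmax _ ⟨_, ⟨sup_le hK₀
      (span_le.mpr (Set.singleton_subset_iff.mpr hp)), hfg.sup (fg_span_singleton p)⟩, rfl⟩)).symm
  obtain ⟨m, hm, s, hms⟩ : f p ∈ loc K₀ :=
    hsup ▸ ⟨p, mem_sup_right (mem_span_singleton_self p), 1, IsLocalizedModule.mk'_one R⁰ f p⟩
  have : f m = f ((s : R) • p) := by
    rw [map_smul, ← hms, ← Submonoid.smul_def, IsLocalizedModule.mk'_cancel']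
  obtain ⟨c, hc⟩ := (IsLocalizedModule.eq_iff_exists R⁰ f).mp this
  refine ⟨c * s, mul_mem c.2 s.2, ?_⟩
  rw [mul_smul, ← Submonoid.smul_def, ← hc]
  exact K₀.smul_of_tower_mem c hm

theorem LinearMap.exists_comp_eq_subtype_range_of_ker_le {R M P F : Type*} [CommRing R]
    [AddCommGroup M] [Module R M] [AddCommGroup P] [Module R P] [AddCommGroup F] [Module R F]
    (f : P →ₗ[R] M) (a : P →ₗ[R] F) (y : F →ₗ[R] M) (hfa : f = y ∘ₗ a)
    (hker : ker f ≤ ker a) : ∃ φ : range f →ₗ[R] F, ∀ n, y (φ n) = n := by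
  refine ⟨(ker f).liftQ a hker ∘ₗ f.quotKerEquivRange.symm.toLinearMap, ?_⟩
  intro n
  obtain ⟨q, rfl⟩ := f.quotKerEquivRange.surjective n
  induction q using Submodule.Quotient.induction_on
  simp [hfa]

theorem Module.Flat.finitelyProjective {R : Type u} {M : Type v} [CommRing R] [AddCommGroup M]
    [Module R M] [Module.Flat R M] [IsNoetherianRing (FractionRing R)] :
    FinitelyProjective R M := by
  intro N hN
  obtain ⟨n, x, rfl⟩ := Submodule.fg_iff_exists_fin_generating_family.mp hN
  rw [← Finsupp.range_linearCombination]
  set f := Finsupp.linearCombination R x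
  obtain ⟨K₀, hK₀, hfg, hsat⟩ := (LinearMap.ker f).exists_fg_le_forall_smul_mem
  have : Module.Finite R K₀ := Module.Finite.iff_fg.mpr hfg
  obtain ⟨k, a, y, hfa, haK₀⟩ := exists_factorization_of_comp_eq_zero_of_free
    (K := K₀) (f := K₀.subtype) (x := f) (LinearMap.ext fun p => hK₀ p.2)
  have hker : LinearMap.ker f ≤ LinearMap.ker a := fun p hp => by
    obtain ⟨t, ht, htp⟩ := hsat p hp
    have : t • a p = 0 := by rw [← map_smul]; exact LinearMap.congr_fun haK₀ ⟨_, htp⟩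
    exact (isRegular_iff_mem_nonZeroDivisors.mpr ht).smul_eq_zero_iff_right.mp this
  let e : (Fin k →₀ R) ≃ₗ[R] (ULift.{v} (Fin k) →₀ R) := Finsupp.domLCongr Equiv.ulift.symm
  obtain ⟨φ, hφ⟩ := f.exists_comp_eq_subtype_range_of_ker_le (e.toLinearMap ∘ₗ a)
    (y ∘ₗ e.symm.toLinearMap) (by rw [hfa]; ext; simp) (by rwa [LinearEquiv.ker_comp])
  exact ⟨_, φ, _, hφ⟩

theorem FinitelyProjective.singlyProjective {R : Type u} {M : Type v} [Ring R] [AddCommGroup M]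
    [Module R M] (h : FinitelyProjective R M) : SinglyProjective R M :=
  fun x => h _ (Submodule.fg_span_singleton x)

theorem Module.IsTrivialRelation.map {R M N : Type*} [CommRing R] [AddCommGroup M] [Module R M]
    [AddCommGroup N] [Module R N] {ι : Type*} [Fintype ι] {f : ι → R} {x : ι → M}
    (h : IsTrivialRelation f x) (g : M →ₗ[R] N) : IsTrivialRelation f (g ∘ x) := by
  obtain ⟨k, a, y, hxy, hfa⟩ := h
  exact ⟨k, a, g ∘ y, fun i => by simp [hxy i, map_sum], hfa⟩

theorem Module.Flat.directLimit {R ι : Type*} [CommRing R] [Preorder ι] [IsDirectedOrder ι]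
    [Nonempty ι] [DecidableEq ι] {G : ι → Type*} [∀ i, AddCommGroup (G i)] [∀ i, Module R (G i)]
    [∀ i, Flat R (G i)] (f : ∀ i j, i ≤ j → G i →ₗ[R] G j) [DirectedSystem G (f · · ·)] :
    Flat R (DirectLimit G f) := by
  refine of_forall_isTrivialRelation fun {l c x} hx => ?_
  choose i u hu using fun j => DirectLimit.exists_of (x j)
  obtain ⟨k, hk⟩ := Finset.exists_le (Finset.univ.image i)
  have hik (j : Fin l) : i j ≤ k := hk _ (Finset.mem_image_of_mem i (Finset.mem_univ j))
  set v := fun j => f (i j) k (hik j) (u j)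
  have hxv : x = DirectLimit.of R ι G f k ∘ v := funext fun j => by simp [v, DirectLimit.of_f, hu]
  have hv : DirectLimit.of R ι G f k (∑ j, c j • v j) = 0 := by simpa [hxv] using hx
  obtain ⟨m, hkm, hm⟩ := DirectLimit.of.zero_exact hv
  have : IsTrivialRelation c (f k m hkm ∘ v) :=
    isTrivialRelation_of_sum_smul_eq_zero (by simpa using hm)
  simpa [hxv, Function.comp_def, DirectLimit.of_f] using this.map (DirectLimit.of R ι G f m)

theorem SinglyProjective.exists_mem_smul_top_annihilator_le {R : Type u} {M : Type v} [CommRing R]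
    [AddCommGroup M] [Module R M] (h : SinglyProjective R M) (x : M) :
    ∃ J : Ideal R, x ∈ J • (⊤ : Submodule R M) ∧
      (R ∙ x).annihilator ≤ Submodule.annihilator J := by
  obtain ⟨ι, φ, π, hπφ⟩ := h x
  set c := φ ⟨x, Submodule.mem_span_singleton_self x⟩
  set J := Ideal.span (Set.range c)
  refine ⟨J, ?_, fun a ha => ?_⟩
  · have hπc : π c = x := hπφ _
    rw [← hπc, ← c.sum_single, map_finsuppSum]
    refine Submodule.sum_mem _ fun j _ => ?_
    show π (Finsupp.single j (c j)) ∈ J • ⊤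
    rw [← mul_one (c j), ← smul_eq_mul, ← Finsupp.smul_single, map_smul]
    exact Submodule.smul_mem_smul (Ideal.subset_span ⟨j, rfl⟩) Submodule.mem_top
  · rw [Submodule.mem_annihilator_span_singleton] at ha
    have hac : a • c = 0 := by
      rw [← map_smul, ← map_zero φ]
      congr 1
      exact Subtype.ext ha
    rw [Submodule.mem_annihilator_span]
    rintro ⟨_, j, rfl⟩
    exact congr($hac j)

section

variable {R : Type u} [CommRing R] (t : ℕ → R)

def mulTransition (i j : ℕ) (_ : i ≤ j) : R →ₗ[R] R :=
  LinearMap.mulLeft R (∏ k ∈ Ico i j, t k)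

instance : DirectedSystem (fun _ : ℕ => R) (mulTransition t · · ·) where
  map_self i x := by simp [mulTransition]
  map_map _ _ _ hij hjk x := by
    simp only [mulTransition, LinearMap.mulLeft_apply, ← prod_Ico_consecutive t hij hjk]
    ring

/-- The direct limit of `R --t 0--> R --t 1--> R --t 2--> ⋯`. -/
abbrev SeqLimit : Type u := Module.DirectLimit (fun _ : ℕ => R) (mulTransition t)

namespace SeqLimit

noncomputable abbrev of (i : ℕ) : R →ₗ[R] SeqLimit t :=
  Module.DirectLimit.of R ℕ _ (mulTransition t) i

variable {t}

theorem of_prod_Ico_mul {i j : ℕ} (h : i ≤ j) (x : R) :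
    of t j ((∏ k ∈ Ico i j, t k) * x) = of t i x :=
  Module.DirectLimit.of_f (hij := h)

theorem of_prod_range (p : ℕ) : of t p (∏ i ∈ range p, t i) = of t 0 1 := by
  rw [range_eq_Ico, ← mul_one (∏ i ∈ Ico 0 p, t i), of_prod_Ico_mul (Nat.zero_le p)]

theorem smul_of_zero_one_eq_zero {a : R} {q : ℕ} (h : a * ∏ i ∈ range q, t i = 0) :
    a • of t 0 1 = 0 := by
  rw [← of_prod_range q, ← map_smul, smul_eq_mul, h, map_zero]

theorem exists_of_eq_of_mem_smul_top {J : Ideal R} {y : SeqLimit t}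
    (hy : y ∈ J • (⊤ : Submodule R (SeqLimit t))) : ∃ l, ∃ w ∈ J, of t l w = y := by
  refine Submodule.smul_induction_on hy (fun r hr y _ => ?_) (fun y₁ y₂ h₁ h₂ => ?_)
  · obtain ⟨l, w, rfl⟩ := Module.DirectLimit.exists_of y
    exact ⟨l, r * w, J.mul_mem_right w hr, by rw [← smul_eq_mul, map_smul]⟩
  · obtain ⟨l₁, w₁, hw₁, rfl⟩ := h₁
    obtain ⟨l₂, w₂, hw₂, rfl⟩ := h₂
    refine ⟨max l₁ l₂,
      (∏ k ∈ Ico l₁ (max l₁ l₂), t k) * w₁ + (∏ k ∈ Ico l₂ (max l₁ l₂), t k) * w₂,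
      J.add_mem (J.mul_mem_left _ hw₁) (J.mul_mem_left _ hw₂), ?_⟩
    rw [map_add, of_prod_Ico_mul (le_max_left _ _), of_prod_Ico_mul (le_max_right _ _)]

theorem exists_prod_range_mem {J : Ideal R}
    (h : of t 0 1 ∈ J • (⊤ : Submodule R (SeqLimit t))) : ∃ p, ∏ i ∈ range p, t i ∈ J := by
  obtain ⟨l, w, hw, hlw⟩ := exists_of_eq_of_mem_smul_top h
  have : of t l (w - ∏ i ∈ range l, t i) = 0 := by rw [map_sub, hlw, of_prod_range, sub_self]
  obtain ⟨p, hlp, hp⟩ := Module.DirectLimit.of.zero_exact this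
  refine ⟨p, ?_⟩
  rw [← prod_range_mul_prod_Ico t hlp, mul_comm]
  simp only [mulTransition, LinearMap.mulLeft_apply, mul_sub, sub_eq_zero] at hp
  exact hp ▸ J.mul_mem_left _ hw

instance : Module.Flat R (SeqLimit t) := Module.Flat.directLimit _

theorem exists_forall_mul_prod_range_eq_zero (h : SinglyProjective R (SeqLimit t)) :
    ∃ p, ∀ a q, a * ∏ i ∈ range q, t i = 0 → a * ∏ i ∈ range p, t i = 0 := by
  obtain ⟨J, hJ, hann⟩ := h.exists_mem_smul_top_annihilator_le (of t 0 1)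
  obtain ⟨p, hp⟩ := exists_prod_range_mem hJ
  refine ⟨p, fun a q haq => ?_⟩
  have ha := (Submodule.mem_annihilator_span_singleton _ _).mpr (smul_of_zero_one_eq_zero haq)
  exact Submodule.mem_annihilator.mp (hann ha) _ hp

end SeqLimit

end

theorem isNilpotent_of_forall_singlyProjective {R : Type u} [CommRing R]
    (hval : ∀ I J : Ideal R, I ≤ J ∨ J ≤ I)
    (h : ∀ (M : Type u) [AddCommGroup M] [Module R M], Module.Flat R M → SinglyProjective R M) :
    IsNilpotent (Ideal.span ((R⁰ : Submonoid R) : Set R)ᶜ) := by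
  by_contra hn
  have : Nontrivial R :=
    not_subsingleton_iff_nontrivial.mp fun _ => hn ⟨1, Subsingleton.elim _ _⟩
  obtain ⟨t, htZ, htp⟩ := Ideal.exists_seq_prod_range_ne_zero hval hn
  obtain ⟨p, hp⟩ := SeqLimit.exists_forall_mul_prod_range_eq_zero (h _ inferInstance)
  have htp' := (mem_span_compl_nonZeroDivisors_iff hval).mp (htZ p)
  simp only [mem_nonZeroDivisors_iff_right, not_forall, exists_prop] at htp'
  obtain ⟨c, hct, hc⟩ := htp'
  obtain ⟨a, ha, ha'⟩ := exists_mul_mul_eq_zero_and_mul_ne_zero hval hc hct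
    (prod_range_succ t p ▸ htp (p + 1))
  exact ha' (hp a (p + 1) (by rwa [prod_range_succ]))

/-- for a valuation ring `R` with set of zero-divisors `Z` and total quotient
ring `Q = R_Z` the following are equivalent: (1) `Z` is a nilpotent ideal; (2) `Q` is
artinian; (3) every flat `R`-module is finitely projective; (4) every flat `R`-module is
singly projective. -/
theorem zeroDivisors_nilpotent_tfae (R : Type u) [CommRing R]
    (hval : ∀ I J : Ideal R, I ≤ J ∨ J ≤ I) :
    List.TFAE
      [IsNilpotent (Ideal.span {r : R | ∃ s : R, s ≠ 0 ∧ r * s = 0}),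
       IsArtinianRing (FractionRing R),
       ∀ (M : Type u) [AddCommGroup M] [Module R M],
        Module.Flat R M → FinitelyProjective R M,
       ∀ (M : Type u) [AddCommGroup M] [Module R M],
        Module.Flat R M → SinglyProjective R M] := by
  rw [setOf_exists_ne_zero_mul_eq_zero]
  tfae_have 1 ↔ 2 := isNilpotent_span_compl_nonZeroDivisors_iff_isArtinianRing hval
  tfae_have 2 → 3 := fun _ _ _ _ _ => Module.Flat.finitelyProjective
  tfae_have 3 → 4 := fun h M _ _ hM => (h M hM).singlyProjective
  tfae_have 4 → 1 := isNilpotent_of_forall_singlyProjective hval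
  tfae_finish
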